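/- arXiv:2306.09791 — 7 statements merged into one kernel-verified Lean document; each statement's English description precedes it below -/
import Mathlib

section
/- Let (a_n) be a sequence of nonnegative reals with ∑ a_n ≤ B for a natural number B. Then for every ε > 0 and every function f : ℕ → ℕ, there exists n ≤ Ψ(B,ε,f) such that a_i ≤ ε for all i ∈ [n, n+f(n)], where Ψ(B,ε,f) := f̌^(R)(0) with f̌(p) := p + f(p) + 1 and R := ⌊B/ε⌋. -/
/-!
Cut ℕ into the consecutive blocks `[n, n + f n]` with `n = f̌^(m)(0)`. If each of the first
`R + 1` blocks contained a term `> ε`, the blocks would contribute more than `(R + 1) ε > B` to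
the sum; so one of them has total mass, and hence every term, at most `ε`.
-/

open Finset

lemma mul_le_sum_Ico_of_le_sum_blocks {a : ℕ → ℝ} {b : ℕ → ℕ} (hb : Monotone b) {ε : ℝ}
    {k : ℕ} (hblock : ∀ m < k, ε ≤ ∑ i ∈ Ico (b m) (b (m + 1)), a i) :
    k * ε ≤ ∑ i ∈ Ico (b 0) (b k), a i := by
  induction k with
  | zero => simp
  | succ k ih =>
    rw [← sum_Ico_consecutive a (hb k.zero_le) (hb k.le_succ)]
    push_cast
    linarith [ih fun m hm => hblock m (by omega), hblock k k.lt_succ_self]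

lemma exists_sum_Ico_le_of_tsum_le {a : ℕ → ℝ} (ha : ∀ n, 0 ≤ a n) (hsum : Summable a)
    {B ε : ℝ} (hB : ∑' n, a n ≤ B) (hε : 0 < ε) {b : ℕ → ℕ} (hb : Monotone b) :
    ∃ m ≤ ⌊B / ε⌋₊, ∑ i ∈ Ico (b m) (b (m + 1)), a i ≤ ε := by
  by_contra! hbig
  set R := ⌊B / ε⌋₊
  have hlower : (R + 1 : ℕ) * ε ≤ ∑ i ∈ Ico (b 0) (b (R + 1)), a i :=
    mul_le_sum_Ico_of_le_sum_blocks hb fun m hm => (hbig m (by omega)).le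
  have hupper : ∑ i ∈ Ico (b 0) (b (R + 1)), a i ≤ B :=
    (hsum.sum_le_tsum _ fun i _ => ha i).trans hB
  have hR : B < (R + 1 : ℕ) * ε := by
    push_cast
    exact (div_lt_iff₀ hε).mp (Nat.lt_floor_add_one _)
  linarith

theorem stmt_0 (a : ℕ → ℝ) (ha : ∀ n, 0 ≤ a n) (B : ℕ)
    (hsum : Summable a) (hB : ∑' n, a n ≤ B) :
    ∀ ε > (0:ℝ), ∀ f : ℕ → ℕ,
      ∃ n ≤ (fun p => p + f p + 1)^[⌊(B : ℝ) / ε⌋₊] 0,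
        ∀ i ∈ Finset.Icc n (n + f n), a i ≤ ε := by
  intro ε hε f
  set g : ℕ → ℕ := fun p => p + f p + 1
  have hmono : Monotone fun m => g^[m] 0 :=
    fun _ _ hmm => Function.monotone_iterate_of_id_le (fun p => by simp only [g, id_eq]; omega) hmm 0
  obtain ⟨m, hm, hsmall⟩ := exists_sum_Ico_le_of_tsum_le ha hsum hB hε hmono
  refine ⟨g^[m] 0, hmono hm, fun i hi => ?_⟩
  rw [Function.iterate_succ_apply'] at hsmall
  have hi' : i ∈ Ico (g^[m] 0) (g (g^[m] 0)) := by
    simp only [mem_Icc, mem_Ico, g] at hi ⊢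
    omega
  exact (single_le_sum (fun j _ => ha j) hi').trans hsmall
end

section
/- Let (a_n) be a sequence of nonnegative reals with ∑ a_n² ≤ B for B ∈ ℕ, let s_n := ∑_{k=0}^n a_k (with s_j := 0 for j < 0), and let m ≥ 2. Then for every ε > 0 and N ∈ ℕ there exists n ∈ [N, N + φ_B(m,ε,N)] such that s_n·(s_n − s_{n−m−1}) ≤ ε, where φ_B(m,ε,N) := ⌊e^{((m+1)B/ε)²}⌋·(N+1). -/
/-!
Suppose `s_n (s_n - s_{n-m-1}) > ε` throughout `[N, N + φ]`. By Cauchy–Schwarz,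
`s_n² ≤ (n + 1) B` and `(s_n - s_{n-m-1})² ≤ (m + 1) Q_n`, where `Q_n` is the sum of `a_k²` over
the window `(n - m - 1, n]`; hence `Q_n > ε² / ((m + 1) B (n + 1))`. The windows ending at
`n_j = N + j (m + 1)` are disjoint, so these lower bounds sum to at most `B`, while
`∑_j 1 / (n_j + 1)` grows like `log` of the length of the interval divided by `m + 1`. The choice
of `φ` makes the logarithm exceed `((m + 1) B / ε)²`, a contradiction.
-/

open Finset Real Function

theorem log_add_nat_mul_sub_log_le {x c : ℝ} (hx : 0 < x) (hc : 0 ≤ c) (J : ℕ) :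
    log (x + J * c) - log x ≤ ∑ j ∈ range J, c / (x + j * c) := by
  have htele := sum_range_sub (fun j : ℕ => log (x + j * c)) J
  simp only [Nat.cast_zero, zero_mul, add_zero, Nat.cast_succ] at htele
  rw [← htele]
  gcongr with j
  have hpos : 0 < x + j * c := by positivity
  rw [← log_div (by positivity) hpos.ne']
  calc log ((x + (j + 1) * c) / (x + j * c)) ≤ (x + (j + 1) * c) / (x + j * c) - 1 :=
        log_le_sub_one_of_pos (by positivity)
    _ = c / (x + j * c) := by field_simp; ring

theorem lt_mul_sum_inv_arithProgression (X : ℝ) (N m : ℕ) :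
    X < (m + 1) * ∑ j ∈ range (⌊exp X⌋₊ * (N + 1) / (m + 1) + 1),
      1 / ((N + 1 : ℝ) + j * (m + 1)) := by
  set J := ⌊exp X⌋₊ * (N + 1) / (m + 1) + 1
  have hJ : ⌊exp X⌋₊ * (N + 1) + N + 1 ≤ N + J * (m + 1) := by
    have := Nat.lt_div_mul_add (a := ⌊exp X⌋₊ * (N + 1)) (by omega : 0 < m + 1)
    simp only [J, add_mul, one_mul]
    omega
  have hgrow : (N + 1 : ℝ) * exp X < (N + 1) + J * (m + 1) := by
    have hfloor := Nat.lt_floor_add_one (exp X)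
    have hJ' : (⌊exp X⌋₊ : ℝ) * (N + 1) + N + 1 ≤ N + J * (m + 1) := by exact_mod_cast hJ
    nlinarith
  calc X = log ((N + 1 : ℝ) * exp X) - log (N + 1) := by
        rw [log_mul (by positivity) (exp_ne_zero X), log_exp]; ring
    _ < log ((N + 1 : ℝ) + J * (m + 1)) - log (N + 1) := by
        gcongr
    _ ≤ ∑ j ∈ range J, (m + 1) / ((N + 1 : ℝ) + j * (m + 1)) :=
        log_add_nat_mul_sub_log_le (by positivity) (by positivity) J
    _ = _ := by rw [mul_sum]; simp only [mul_one_div]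

theorem sq_lt_card_mul_card_mul_sum_sq {ι : Type*} (a : ι → ℝ) (s w : Finset ι) {ε B : ℝ}
    (hε : 0 < ε) (hB : ∑ k ∈ s, a k ^ 2 ≤ B) (h : ε < (∑ k ∈ s, a k) * ∑ k ∈ w, a k) :
    ε ^ 2 < #s * B * (#w * ∑ k ∈ w, a k ^ 2) := by
  have hs := sq_sum_le_card_mul_sum_sq (s := s) (f := a)
  have hw := sq_sum_le_card_mul_sum_sq (s := w) (f := a)
  calc ε ^ 2 < ((∑ k ∈ s, a k) * ∑ k ∈ w, a k) ^ 2 := by gcongr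
    _ = (∑ k ∈ s, a k) ^ 2 * (∑ k ∈ w, a k) ^ 2 := mul_pow _ _ _
    _ ≤ (#s * ∑ k ∈ s, a k ^ 2) * (#w * ∑ k ∈ w, a k ^ 2) := by gcongr
    _ ≤ #s * B * (#w * ∑ k ∈ w, a k ^ 2) := by gcongr

theorem sum_sum_le_tsum_of_pairwiseDisjoint {ι κ : Type*} [DecidableEq ι] {f : ι → ℝ}
    (hf : ∀ i, 0 ≤ f i) (hsum : Summable f) {s : Finset κ} {t : κ → Finset ι}
    (ht : (s : Set κ).PairwiseDisjoint t) :
    ∑ j ∈ s, ∑ i ∈ t j, f i ≤ ∑' i, f i := by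
  rw [← sum_biUnion ht]
  exact hsum.sum_le_tsum _ fun i _ => hf i

/-- `s n - s (n - m - 1)` is the sum over this window; truncated subtraction makes it start at `0`
when `n < m`, matching `s j = 0` for `j < 0`. -/
def window (m n : ℕ) : Finset ℕ := Ico (n - m) (n + 1)

theorem card_window_le (m n : ℕ) : #(window m n) ≤ m + 1 := by
  simp only [window, Nat.card_Ico]
  omega

theorem pairwise_disjoint_window (m N : ℕ) :
    Pairwise (Disjoint on fun j => window m (N + j * (m + 1))) := by
  refine pairwise_disjoint_on _ |>.mpr fun i j hij => ?_
  have : i * (m + 1) + (m + 1) ≤ j * (m + 1) := by nlinarith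
  simp only [window, disjoint_left, mem_Ico]
  omega

theorem sq_div_lt_mul_sum_sq_window (a : ℕ → ℝ) {ε B : ℝ} (hε : 0 < ε) (m n : ℕ)
    (hB : ∑ k ∈ range (n + 1), a k ^ 2 ≤ B)
    (h : ε < (∑ k ∈ range (n + 1), a k) * ∑ k ∈ window m n, a k) :
    ε ^ 2 / (n + 1) < (m + 1) * B * ∑ k ∈ window m n, a k ^ 2 := by
  have hcs := sq_lt_card_mul_card_mul_sum_sq a _ _ hε hB h
  have hcard : (#(window m n) : ℝ) ≤ m + 1 := by exact_mod_cast card_window_le m n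
  have hBQ : 0 ≤ B * ∑ k ∈ window m n, a k ^ 2 :=
    mul_nonneg ((sum_nonneg fun k _ => sq_nonneg (a k)).trans hB)
      (sum_nonneg fun k _ => sq_nonneg _)
  rw [div_lt_iff₀ (by positivity)]
  push_cast [card_range] at hcs
  nlinarith

theorem sq_mul_sum_inv_le_of_lt_sum_mul_window (a : ℕ → ℝ) {ε B : ℝ} (hε : 0 < ε)
    (hsum : Summable fun n => a n ^ 2) (hB : ∑' n, a n ^ 2 ≤ B) (N m J : ℕ)
    (h : ∀ j < J, ε < (∑ k ∈ range (N + j * (m + 1) + 1), a k) *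
      ∑ k ∈ window m (N + j * (m + 1)), a k) :
    ε ^ 2 * ∑ j ∈ range J, 1 / ((N + 1 : ℝ) + j * (m + 1)) ≤ (m + 1) * B * B := by
  have hwindow (j : ℕ) (hj : j < J) : ε ^ 2 / ((N + 1 : ℝ) + j * (m + 1)) <
      (m + 1) * B * ∑ k ∈ window m (N + j * (m + 1)), a k ^ 2 := by
    have := sq_div_lt_mul_sum_sq_window a hε m _
      ((hsum.sum_le_tsum _ fun k _ => sq_nonneg (a k)).trans hB) (h j hj)
    push_cast at this
    rwa [add_right_comm] at this
  calc ε ^ 2 * ∑ j ∈ range J, 1 / ((N + 1 : ℝ) + j * (m + 1))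
      = ∑ j ∈ range J, ε ^ 2 / ((N + 1 : ℝ) + j * (m + 1)) := by
        rw [mul_sum]; simp only [mul_one_div]
    _ ≤ ∑ j ∈ range J, (m + 1) * B * ∑ k ∈ window m (N + j * (m + 1)), a k ^ 2 :=
        sum_le_sum fun j hj => (hwindow j (mem_range.mp hj)).le
    _ ≤ (m + 1) * B * B := by
        rw [← mul_sum]
        have hB0 : 0 ≤ B := (tsum_nonneg fun k => sq_nonneg (a k)).trans hB
        gcongr
        exact (sum_sum_le_tsum_of_pairwiseDisjoint (fun k => sq_nonneg (a k)) hsum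
          ((pairwise_disjoint_window m N).set_pairwise _)).trans hB

theorem stmt_1_general (a : ℕ → ℝ) (B : ℕ)
    (hsum : Summable (fun n => (a n) ^ 2)) (hB : ∑' n, (a n) ^ 2 ≤ B)
    (s : ℤ → ℝ) (hs : ∀ n : ℤ, s n = ∑ k ∈ Finset.range (n + 1).toNat, a k)
    (m : ℕ) :
    ∀ ε > (0:ℝ), ∀ N : ℕ,
      ∃ n ∈ Finset.Icc N (N + ⌊Real.exp ((((m : ℝ) + 1) * B / ε) ^ 2)⌋₊ * (N + 1)),
        s n * (s n - s ((n : ℤ) - m - 1)) ≤ ε := by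
  intro ε hε N
  set X := (((m : ℝ) + 1) * B / ε) ^ 2
  set L := ⌊exp X⌋₊ * (N + 1)
  by_contra! hbig
  have hs_sum (n : ℕ) : s n = ∑ k ∈ range (n + 1), a k := by
    rw [hs, show ((n : ℤ) + 1).toNat = n + 1 by omega]
  have hs_window (n : ℕ) : s n - s ((n : ℤ) - m - 1) = ∑ k ∈ window m n, a k := by
    rw [hs_sum, hs, window, sum_Ico_eq_sub _ (by omega)]
    congr 3; omega
  have hupper := sq_mul_sum_inv_le_of_lt_sum_mul_window a hε hsum hB N m (L / (m + 1) + 1)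
    fun j hj => by
      have hjL : j * (m + 1) ≤ L := (Nat.mul_le_mul_right _ (by omega)).trans
        (Nat.div_mul_le_self L (m + 1))
      rw [← hs_sum, ← hs_window]
      exact hbig _ (mem_Icc.mpr ⟨by omega, by omega⟩)
  have hlower := mul_lt_mul_of_pos_left (lt_mul_sum_inv_arithProgression X N m) (pow_pos hε 2)
  have hX : ε ^ 2 * X = ((m + 1) * B) ^ 2 := by
    simp only [X, div_pow]; field_simp
  nlinarith

theorem stmt_1 (a : ℕ → ℝ) (ha : ∀ n, 0 ≤ a n) (B : ℕ)
    (hsum : Summable (fun n => (a n) ^ 2)) (hB : ∑' n, (a n) ^ 2 ≤ B)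
    (s : ℤ → ℝ) (hs : ∀ n : ℤ, s n = ∑ k ∈ Finset.range (n + 1).toNat, a k)
    (m : ℕ) (hm : 2 ≤ m) :
    ∀ ε > (0:ℝ), ∀ N : ℕ,
      ∃ n ∈ Finset.Icc N (N + ⌊Real.exp ((((m : ℝ) + 1) * B / ε) ^ 2)⌋₊ * (N + 1)),
        s n * (s n - s ((n : ℤ) - m - 1)) ≤ ε :=
  stmt_1_general a B hsum hB s hs m
end

section
/- For the Dykstra iteration, for every n ∈ ℕ one has ∑_{k=n−m+1}^{n} ‖q_k‖ ≤ ∑_{k=0}^{n−1} ‖x_k − x_{k+1}‖. -/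
/-! Sliding the window of the last `m` terms one step forward adds `‖q (n+1)‖` and drops
`‖q (n+1-m)‖`; since `q (n+1) - q (n+1-m) = x n - x (n+1)`, the window sum grows by at most
`‖x n - x (n+1)‖`, and it starts at `0`. -/

open Finset

theorem Int.sum_Icc_add_one_add_one_add {M : Type*} [AddCommMonoid M] (f : ℤ → M) {a b : ℤ}
    (h : a ≤ b + 1) :
    ∑ k ∈ Icc (a + 1) (b + 1), f k + f a = ∑ k ∈ Icc a b, f k + f (b + 1) := by
  rw [add_comm, ← sum_insert (by simp), insert_Icc_add_one_left_eq_Icc h,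
    ← insert_Icc_right_eq_Icc_add_one h, sum_insert (by simp), add_comm]

theorem sum_Icc_window_le_of_lag_le {a b : ℤ → ℝ} (m : ℕ) (ha : ∀ k ≤ 0, a k = 0)
    (hstep : ∀ n : ℤ, 0 ≤ n → a (n + 1) ≤ a (n + 1 - m) + b n) (n : ℤ) (hn : 0 ≤ n) :
    ∑ k ∈ Icc (n - m + 1) n, a k ≤ ∑ k ∈ Icc 0 (n - 1), b k := by
  induction n, hn using Int.leInduction with
  | base =>
    rw [sum_eq_zero fun k hk => ha k (mem_Icc.1 hk).2]
    simp
  | succ n hn ih =>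
    have hwindow := Int.sum_Icc_add_one_add_one_add a (a := n - m + 1) (b := n) (by omega)
    have hb : ∑ k ∈ Icc 0 n, b k = ∑ k ∈ Icc 0 (n - 1), b k + b n := by
      rw [add_comm, ← sum_insert (by simp), insert_Icc_sub_one_right_eq_Icc hn]
    have hlag := hstep n hn
    rw [show n + 1 - (m : ℤ) = n - m + 1 by ring] at hlag
    rw [show n + 1 - (m : ℤ) + 1 = n - m + 1 + 1 by ring, add_sub_cancel_right, hb]
    linarith

theorem stmt_9_general
    (X : Type*) [NormedAddCommGroup X]
    (m : ℕ)
    (x q : ℤ → X) (hq0 : ∀ k : ℤ, k ≤ 0 → q k = 0)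
    (hqdef : ∀ n : ℤ, 1 ≤ n → q n = x (n - 1) + q (n - m) - x n)
    : ∀ n : ℤ, 0 ≤ n →
      ∑ k ∈ Finset.Icc (n - m + 1) n, ‖q k‖ ≤ ∑ k ∈ Finset.Icc 0 (n - 1), ‖x k - x (k + 1)‖ := by
  refine sum_Icc_window_le_of_lag_le m (fun k hk => by simp [hq0 k hk]) fun n hn => ?_
  have hq := hqdef (n + 1) (by omega)
  rw [add_sub_cancel_right] at hq
  calc ‖q (n + 1)‖ = ‖q (n + 1 - m) + (x n - x (n + 1))‖ := by rw [hq]; abel_nf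
    _ ≤ ‖q (n + 1 - m)‖ + ‖x n - x (n + 1)‖ := norm_add_le _ _

theorem stmt_9
    (X : Type*) [NormedAddCommGroup X] [InnerProductSpace ℝ X]
    (m : ℕ) (hm : 2 ≤ m)
    (C : ℤ → Set X) (hCcl : ∀ n, IsClosed (C n)) (hCconv : ∀ n, Convex ℝ (C n))
    (hCne : (⋂ j ∈ Finset.Icc (1:ℤ) m, C j).Nonempty)
    (hCper : ∀ n : ℤ, C (n + m) = C n)
    (P : ℤ → X → X)
    (hP : ∀ j (y : X), P j y ∈ C j ∧ ∀ w ∈ C j, ‖y - P j y‖ ≤ ‖y - w‖)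
    (x q : ℤ → X) (hq0 : ∀ k : ℤ, k ≤ 0 → q k = 0)
    (hxdef : ∀ n : ℤ, 1 ≤ n → x n = P n (x (n - 1) + q (n - m)))
    (hqdef : ∀ n : ℤ, 1 ≤ n → q n = x (n - 1) + q (n - m) - x n)
    : ∀ n : ℤ, 0 ≤ n →
      ∑ k ∈ Finset.Icc (n - m + 1) n, ‖q k‖ ≤ ∑ k ∈ Finset.Icc 0 (n - 1), ‖x k - x (k + 1)‖ :=
  stmt_9_general X m x q hq0 hqdef
end

section
/- For the Dykstra iteration and any z ∈ X and i ≥ n ≥ 0: ‖x_i − z‖² ≤ ‖x_n − z‖² + 2∑_{k=n−m+1}^{n}⟨x_k − z, q_k⟩ − 2∑_{k=i−m+1}^{i}⟨x_k − z, q_k⟩. -/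
open scoped RealInnerProductSpace

open Finset

/-!
With `E k = ‖x k - z‖² + 2 ∑_{t = k-m+1}^{k} ⟪x t - z, q t⟫`, the recursion gives
`x k - x (k+1) = q (k+1) - q (k+1-m)`, and expanding `‖x k - z‖²` yields
`E k - E (k+1) = ‖q (k+1) - q (k+1-m)‖² + 2 ⟪x (k+1-m) - x (k+1), q (k+1-m)⟫`.
The last inner product is nonnegative by the variational characterization of the projection onto
`C (k+1-m) = C (k+1)`, which contains `x (k+1)`. Hence `E` is nonincreasing on `k ≥ 0`.
-/

theorem sum_Icc_add_one_add_eq {M : Type*} [AddCommMonoid M] (f : ℤ → M) {a b : ℤ}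
    (hab : a ≤ b + 1) :
    ∑ t ∈ Icc (a + 1) (b + 1), f t + f a = ∑ t ∈ Icc a b, f t + f (b + 1) := by
  rw [add_comm, ← sum_insert (by simp), insert_Icc_add_one_left_eq_Icc hab,
    ← insert_Icc_right_eq_Icc_add_one hab, sum_insert (by simp), add_comm]

section Dykstra

variable {X : Type*} [NormedAddCommGroup X] [InnerProductSpace ℝ X]

theorem real_inner_sub_le_zero_of_forall_norm_sub_le {K : Set X} (hK : Convex ℝ K) {y p : X}
    (hp : p ∈ K) (hmin : ∀ w ∈ K, ‖y - p‖ ≤ ‖y - w‖) {w : X} (hw : w ∈ K) :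
    ⟪y - p, w - p⟫ ≤ 0 := by
  have : Nonempty K := ⟨⟨p, hp⟩⟩
  have hinf : ‖y - p‖ = ⨅ w : K, ‖y - w‖ :=
    le_antisymm (le_ciInf fun w => hmin w w.2)
      (ciInf_le ⟨0, Set.forall_mem_range.2 fun _ => norm_nonneg _⟩ (⟨p, hp⟩ : K))
  exact (norm_eq_iInf_iff_real_inner_le_zero hK hp).mp hinf w hw

theorem norm_sub_sq_add_two_inner_le {a b c z r s : X} (hab : a - b = r - s)
    (hc : 0 ≤ ⟪c - b, s⟫) :
    ‖b - z‖ ^ 2 + 2 * ⟪b - z, r⟫ ≤ ‖a - z‖ ^ 2 + 2 * ⟪c - z, s⟫ := by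
  have hexpand : ‖a - z‖ ^ 2 = ‖b - z‖ ^ 2 + 2 * ⟪b - z, r - s⟫ + ‖r - s‖ ^ 2 := by
    rw [← hab, ← norm_add_sq_real, sub_add_sub_cancel']
  have hcross : ⟪c - b, s⟫ = ⟪c - z, s⟫ - ⟪b - z, s⟫ := by
    rw [← inner_sub_left, sub_sub_sub_cancel_right]
  rw [hexpand, inner_sub_right]
  linarith [sq_nonneg ‖r - s‖]

variable {m : ℕ} {C : ℤ → Set X} {P : ℤ → X → X} {x q : ℤ → X}

theorem dykstra_inner_q_nonpos (hCconv : ∀ n, Convex ℝ (C n))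
    (hP : ∀ j (y : X), P j y ∈ C j ∧ ∀ w ∈ C j, ‖y - P j y‖ ≤ ‖y - w‖)
    (hxdef : ∀ n : ℤ, 1 ≤ n → x n = P n (x (n - 1) + q (n - m)))
    (hqdef : ∀ n : ℤ, 1 ≤ n → q n = x (n - 1) + q (n - m) - x n)
    {j : ℤ} (hj : 1 ≤ j) {w : X} (hw : w ∈ C j) :
    ⟪q j, w - x j⟫ ≤ 0 := by
  rw [hqdef j hj, hxdef j hj]
  exact real_inner_sub_le_zero_of_forall_norm_sub_le (hCconv j) (hP j _).1 (hP j _).2 hw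

theorem dykstra_inner_sub_shift_nonneg (hCconv : ∀ n, Convex ℝ (C n))
    (hCper : ∀ n : ℤ, C (n + m) = C n)
    (hP : ∀ j (y : X), P j y ∈ C j ∧ ∀ w ∈ C j, ‖y - P j y‖ ≤ ‖y - w‖)
    (hq0 : ∀ k : ℤ, k ≤ 0 → q k = 0)
    (hxdef : ∀ n : ℤ, 1 ≤ n → x n = P n (x (n - 1) + q (n - m)))
    (hqdef : ∀ n : ℤ, 1 ≤ n → q n = x (n - 1) + q (n - m) - x n)
    {j : ℤ} (hjm : 1 ≤ j + m) :
    0 ≤ ⟪x j - x (j + m), q j⟫ := by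
  rcases le_or_gt j 0 with hj | hj
  · simp [hq0 j hj]
  have hmem : x (j + m) ∈ C j := by
    rw [← hCper, hxdef _ hjm]
    exact (hP _ _).1
  have h := dykstra_inner_q_nonpos hCconv hP hxdef hqdef hj hmem
  rw [← neg_sub, inner_neg_left, real_inner_comm]
  linarith

noncomputable def dykstraEnergy (x q : ℤ → X) (m : ℕ) (z : X) (k : ℤ) : ℝ :=
  ‖x k - z‖ ^ 2 + 2 * ∑ t ∈ Icc (k - m + 1) k, ⟪x t - z, q t⟫

theorem dykstraEnergy_add_one_le (hqdef : ∀ n : ℤ, 1 ≤ n → q n = x (n - 1) + q (n - m) - x n)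
    (hcross : ∀ j : ℤ, 1 ≤ j + m → 0 ≤ ⟪x j - x (j + m), q j⟫) (z : X) {k : ℤ} (hk : 0 ≤ k) :
    dykstraEnergy x q m z (k + 1) ≤ dykstraEnergy x q m z k := by
  have hstep : x k - x (k + 1) = q (k + 1) - q (k + 1 - m) := by
    rw [hqdef (k + 1) (by omega), add_sub_cancel_right]
    abel
  have hc : 0 ≤ ⟪x (k + 1 - m) - x (k + 1), q (k + 1 - m)⟫ := by
    simpa using hcross (k + 1 - m) (by omega)
  have hineq := norm_sub_sq_add_two_inner_le (z := z) hstep hc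
  have hsum := sum_Icc_add_one_add_eq (fun t => ⟪x t - z, q t⟫) (a := k + 1 - m) (b := k)
    (by omega)
  unfold dykstraEnergy
  rw [show k - (m : ℤ) + 1 = k + 1 - m by ring]
  linarith

theorem dykstraEnergy_le_of_le (hqdef : ∀ n : ℤ, 1 ≤ n → q n = x (n - 1) + q (n - m) - x n)
    (hcross : ∀ j : ℤ, 1 ≤ j + m → 0 ≤ ⟪x j - x (j + m), q j⟫) (z : X) {n i : ℤ} (hn : 0 ≤ n)
    (hni : n ≤ i) :
    dykstraEnergy x q m z i ≤ dykstraEnergy x q m z n := by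
  induction i, hni using Int.leInduction with
  | base => exact le_rfl
  | succ k hnk ih => exact (dykstraEnergy_add_one_le hqdef hcross z (hn.trans hnk)).trans ih

end Dykstra

theorem stmt_11_general
    (X : Type*) [NormedAddCommGroup X] [InnerProductSpace ℝ X]
    (m : ℕ)
    (C : ℤ → Set X) (hCconv : ∀ n, Convex ℝ (C n))
    (hCper : ∀ n : ℤ, C (n + m) = C n)
    (P : ℤ → X → X)
    (hP : ∀ j (y : X), P j y ∈ C j ∧ ∀ w ∈ C j, ‖y - P j y‖ ≤ ‖y - w‖)
    (x q : ℤ → X) (hq0 : ∀ k : ℤ, k ≤ 0 → q k = 0)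
    (hxdef : ∀ n : ℤ, 1 ≤ n → x n = P n (x (n - 1) + q (n - m)))
    (hqdef : ∀ n : ℤ, 1 ≤ n → q n = x (n - 1) + q (n - m) - x n)
    : ∀ z : X, ∀ n i : ℤ, 0 ≤ n → n ≤ i →
      ‖x i - z‖ ^ 2 ≤ ‖x n - z‖ ^ 2
        + 2 * ∑ k ∈ Finset.Icc (n - m + 1) n, ⟪x k - z, q k⟫
        - 2 * ∑ k ∈ Finset.Icc (i - m + 1) i, ⟪x k - z, q k⟫ := by
  intro z n i hn hni
  have hcross : ∀ j : ℤ, 1 ≤ j + m → 0 ≤ ⟪x j - x (j + m), q j⟫ := fun _ hj =>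
    dykstra_inner_sub_shift_nonneg hCconv hCper hP hq0 hxdef hqdef hj
  have henergy := dykstraEnergy_le_of_le hqdef hcross z hn hni
  unfold dykstraEnergy at henergy
  linarith

theorem stmt_11
    (X : Type*) [NormedAddCommGroup X] [InnerProductSpace ℝ X]
    (m : ℕ) (hm : 2 ≤ m)
    (C : ℤ → Set X) (hCcl : ∀ n, IsClosed (C n)) (hCconv : ∀ n, Convex ℝ (C n))
    (hCne : (⋂ j ∈ Finset.Icc (1:ℤ) m, C j).Nonempty)
    (hCper : ∀ n : ℤ, C (n + m) = C n)
    (P : ℤ → X → X)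
    (hP : ∀ j (y : X), P j y ∈ C j ∧ ∀ w ∈ C j, ‖y - P j y‖ ≤ ‖y - w‖)
    (x q : ℤ → X) (hq0 : ∀ k : ℤ, k ≤ 0 → q k = 0)
    (hxdef : ∀ n : ℤ, 1 ≤ n → x n = P n (x (n - 1) + q (n - m)))
    (hqdef : ∀ n : ℤ, 1 ≤ n → q n = x (n - 1) + q (n - m) - x n)
    : ∀ z : X, ∀ n i : ℤ, 0 ≤ n → n ≤ i →
      ‖x i - z‖ ^ 2 ≤ ‖x n - z‖ ^ 2
        + 2 * ∑ k ∈ Finset.Icc (n - m + 1) n, ⟪x k - z, q k⟫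
        - 2 * ∑ k ∈ Finset.Icc (i - m + 1) i, ⟪x k - z, q k⟫ :=
  stmt_11_general X m C hCconv hCper P hP x q hq0 hxdef hqdef
end

section
/- For the Dykstra iteration with b ≥ ‖x_0 − p‖ for some common point p: ‖x_n − x_{n+1}‖ → 0, with rate of metastability: for all ε > 0 and f : ℕ → ℕ there exists n ≤ Ψ(b², ε², f) with ‖x_k − x_{k+1}‖ ≤ ε for all k ∈ [n, n+f(n)], where Ψ is the metastability rate for summable sequences (Ψ(B,ε,f) := f̌^{⌊B/ε⌋}(0), f̌(p) = p+f(p)+1). -/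
/-!
Each correction vector `q j = y - P j y` is a normal of `C j` at `x j`, so
`⟪q j, x j - p⟫ ≥ 0` and, by periodicity, `⟪q j, x j - x (j + m)⟫ ≥ 0`. Hence
`E n = ‖x n - p‖² + 2 ∑_{i<m} ⟪q (n - i), x (n - i) - p⟫` is nonnegative and drops by at least
`‖x n - x (n + 1)‖²` at every step, giving `∑ ‖x n - x (n + 1)‖² ≤ ‖x 0 - p‖² ≤ b²`.
For the rate: with `g p = p + f p + 1`, the `M + 1` disjoint windows `[gⁱ 0, gⁱ⁺¹ 0)`, `i ≤ M`,
cannot each contain a term `> δ`, since `M = ⌊B / δ⌋` gives `(M + 1) δ > B`.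
-/

open scoped RealInnerProductSpace
open Finset

theorem real_inner_sub_nonpos_of_forall_norm_sub_le {X : Type*} [NormedAddCommGroup X]
    [InnerProductSpace ℝ X] {K : Set X} (hK : Convex ℝ K) {y v : X} (hv : v ∈ K)
    (hmin : ∀ w ∈ K, ‖y - v‖ ≤ ‖y - w‖) {w : X} (hw : w ∈ K) : ⟪y - v, w - v⟫ ≤ 0 := by
  have : Nonempty K := ⟨⟨v, hv⟩⟩
  have hbdd : BddBelow (Set.range fun w : K => ‖y - w‖) :=
    ⟨0, by rintro _ ⟨w, rfl⟩; exact norm_nonneg _⟩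
  exact (norm_eq_iInf_iff_real_inner_le_zero hK hv).1
    (le_antisymm (le_ciInf fun w => hmin w w.2) (ciInf_le hbdd ⟨v, hv⟩)) w hw

theorem Function.Periodic.mem_of_forall_Icc_mem {α : Type*} {C : ℤ → Set α} {m : ℕ}
    (hC : Function.Periodic C (m : ℤ)) (hm : 1 ≤ m) {p : α}
    (hp : ∀ j ∈ Icc (1 : ℤ) m, p ∈ C j) (k : ℤ) : p ∈ C k := by
  have hm' : (0 : ℤ) < m := by exact_mod_cast hm
  have hk : k = ((k - 1) % m + 1) + (k - 1) / m * m := by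
    linarith [Int.emod_add_mul_ediv (k - 1) m, mul_comm ((k - 1) / m) (m : ℤ)]
  have hCk := hC.int_mul ((k - 1) / m) ((k - 1) % m + 1)
  rw [Int.cast_id] at hCk
  rw [hk, hCk]
  exact hp _ (mem_Icc.2 ⟨by linarith [Int.emod_nonneg (k - 1) hm'.ne'],
    by linarith [Int.emod_lt_of_pos (k - 1) hm']⟩)

theorem sum_range_le_of_add_le {E c : ℕ → ℝ} (hE : ∀ n, 0 ≤ E n)
    (hstep : ∀ n, E (n + 1) + c n ≤ E n) (n : ℕ) : ∑ k ∈ range n, c k ≤ E 0 := by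
  suffices ∀ n, ∑ k ∈ range n, c k + E n ≤ E 0 by linarith [this n, hE n]
  intro n
  induction n with
  | zero => simp
  | succ n ih => rw [sum_range_succ]; linarith [hstep n]

theorem sum_range_sub_sum_range_shift (T : ℤ → ℝ) (m : ℕ) (n : ℤ) :
    ∑ i ∈ range m, T (n + 1 - i) - ∑ i ∈ range m, T (n - i) = T (n + 1) - T (n + 1 - m) := by
  rw [← sum_sub_distrib]
  convert sum_range_sub' (fun i : ℕ => T (n + 1 - i)) m using 2 <;> push_cast <;> ring_nf

theorem mul_le_sum_range_of_forall_exists_Ico {c : ℕ → ℝ} (hc : ∀ k, 0 ≤ c k) {δ : ℝ}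
    {N : ℕ → ℕ} {j : ℕ} (h : ∀ i < j, ∃ k ∈ Ico (N i) (N (i + 1)), δ ≤ c k) :
    j * δ ≤ ∑ k ∈ range (N j), c k := by
  induction j with
  | zero => simpa using sum_nonneg fun k _ => hc k
  | succ j ih =>
    obtain ⟨k, hk, hδk⟩ := h j j.lt_succ_self
    have hNj : N j ≤ N (j + 1) := (mem_Ico.1 hk).1.trans (mem_Ico.1 hk).2.le
    rw [← sum_range_add_sum_Ico _ hNj]
    push_cast
    linarith [ih fun i hi => h i (hi.trans j.lt_succ_self),
      single_le_sum (fun i _ => hc i) hk]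

theorem exists_le_iterate_forall_Icc_le_of_sum_range_le {c : ℕ → ℝ} (hc : ∀ k, 0 ≤ c k) {B : ℝ}
    (hB : ∀ n, ∑ k ∈ range n, c k ≤ B) {δ : ℝ} (hδ : 0 < δ) (f : ℕ → ℕ) :
    ∃ n ≤ (fun p => p + f p + 1)^[⌊B / δ⌋₊] 0, ∀ k ∈ Icc n (n + f n), c k ≤ δ := by
  by_contra! hbad
  set g : ℕ → ℕ := fun p => p + f p + 1
  set M := ⌊B / δ⌋₊
  have hg : Monotone fun i => g^[i] 0 :=
    monotone_nat_of_le_succ fun i => by rw [Function.iterate_succ_apply']; simp only [g]; omega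
  have hblocks : ∀ i < M + 1, ∃ k ∈ Ico (g^[i] 0) (g^[i + 1] 0), δ ≤ c k := by
    intro i hi
    obtain ⟨k, hk, hδk⟩ := hbad _ (hg (Nat.lt_succ_iff.1 hi))
    rw [Function.iterate_succ_apply']
    exact ⟨k, by simp only [mem_Icc, mem_Ico, g] at hk ⊢; omega, hδk.le⟩
  have hlt : B < (M + 1 : ℕ) * δ := by
    have := Nat.lt_floor_add_one (B / δ)
    rw [div_lt_iff₀ hδ] at this
    push_cast
    linarith
  linarith [hB (g^[M + 1] 0), mul_le_sum_range_of_forall_exists_Ico hc hblocks]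

theorem dykstra_sum_norm_sub_sq_le {X : Type*} [NormedAddCommGroup X] [InnerProductSpace ℝ X]
    (m : ℕ) {x q : ℤ → X} {p : X} (hq0 : ∀ j ≤ 0, q j = 0)
    (hdiff : ∀ j, 1 ≤ j → x (j - 1) - x j = q j - q (j - m))
    (hqp : ∀ j, 1 ≤ j → ⟪q j, p - x j⟫ ≤ 0)
    (hqx : ∀ j, 1 ≤ j → ⟪q j, x (j + m) - x j⟫ ≤ 0) (n : ℕ) :
    ∑ k ∈ range n, ‖x k - x (k + 1)‖ ^ 2 ≤ ‖x 0 - p‖ ^ 2 := by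
  set T : ℤ → ℝ := fun j => ⟪q j, x j - p⟫
  have hT : ∀ j, 0 ≤ T j := by
    intro j
    rcases le_or_gt j 0 with hj | hj
    · simp [T, hq0 j hj]
    · have := hqp j hj
      rw [← neg_sub, inner_neg_right] at this
      exact neg_nonpos.1 this
  have hcross : ∀ j, 0 ≤ ⟪q j, x j - x (j + m)⟫ := by
    intro j
    rcases le_or_gt j 0 with hj | hj
    · simp [hq0 j hj]
    · have := hqx j hj
      rw [← neg_sub, inner_neg_right] at this
      exact neg_nonpos.1 this
  set E : ℕ → ℝ := fun n => ‖x n - p‖ ^ 2 + 2 * ∑ i ∈ range m, T (n - i)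
  refine (sum_range_le_of_add_le (E := E) (fun n => ?_) (fun n => ?_) n).trans_eq ?_
  · exact add_nonneg (sq_nonneg _) (mul_nonneg zero_le_two (sum_nonneg fun i _ => hT _))
  · have hd : x n - x (n + 1) = q (n + 1) - q (n + 1 - m) := by
      simpa using hdiff (n + 1) (by omega)
    have hexp := norm_add_sq_real (x n - x (n + 1)) (x (n + 1) - p)
    rw [sub_add_sub_cancel] at hexp
    have hin : ⟪x n - x (n + 1), x (n + 1) - p⟫
        = T (n + 1) - T (n + 1 - m) + ⟪q (n + 1 - m), x (n + 1 - m) - x (n + 1)⟫ := by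
      simp only [hd, T, inner_sub_left, inner_sub_right]
      ring
    have hc := hcross (n + 1 - m)
    rw [sub_add_cancel] at hc
    have hW := sum_range_sub_sum_range_shift T m n
    simp only [E]
    push_cast
    linarith
  · simp [E, T, hq0]

theorem tendsto_zero_of_sum_range_sq_le {a : ℕ → ℝ} (ha : ∀ k, 0 ≤ a k) {B : ℝ}
    (hB : ∀ n, ∑ k ∈ range n, a k ^ 2 ≤ B) : Filter.Tendsto a Filter.atTop (nhds 0) := by
  have hsq := (summable_of_sum_range_le (fun k => sq_nonneg (a k)) hB).tendsto_atTop_zero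
  simpa [Function.comp_def, Real.sqrt_sq (ha _)] using hsq.sqrt

theorem stmt_14_general
    (X : Type*) [NormedAddCommGroup X] [InnerProductSpace ℝ X]
    (m : ℕ) (hm : 2 ≤ m)
    (C : ℤ → Set X) (hCconv : ∀ n, Convex ℝ (C n))
    (hCper : ∀ n : ℤ, C (n + m) = C n)
    (P : ℤ → X → X)
    (hP : ∀ j (y : X), P j y ∈ C j ∧ ∀ w ∈ C j, ‖y - P j y‖ ≤ ‖y - w‖)
    (x q : ℤ → X) (hq0 : ∀ k : ℤ, k ≤ 0 → q k = 0)
    (hxdef : ∀ n : ℤ, 1 ≤ n → x n = P n (x (n - 1) + q (n - m)))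
    (hqdef : ∀ n : ℤ, 1 ≤ n → q n = x (n - 1) + q (n - m) - x n)
    (p : X) (hp : ∀ j ∈ Finset.Icc (1:ℤ) m, p ∈ C j)
    (b : ℕ) (hb : ‖x 0 - p‖ ≤ (b : ℝ))
    : Filter.Tendsto (fun n : ℕ => ‖x (n : ℤ) - x ((n : ℤ) + 1)‖) Filter.atTop (nhds 0) ∧
      ∀ ε > (0:ℝ), ∀ f : ℕ → ℕ,
        ∃ n ≤ (fun p => p + f p + 1)^[⌊((b : ℝ) ^ 2) / ε ^ 2⌋₊] 0,
          ∀ k ∈ Finset.Icc n (n + f n), ‖x (k : ℤ) - x ((k : ℤ) + 1)‖ ≤ ε := by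
  have hpC : ∀ j, p ∈ C j := Function.Periodic.mem_of_forall_Icc_mem hCper (by omega) hp
  have hxC : ∀ j, 1 ≤ j → x j ∈ C j := fun j hj => hxdef j hj ▸ (hP j _).1
  have hnormal : ∀ j, 1 ≤ j → ∀ w ∈ C j, ⟪q j, w - x j⟫ ≤ 0 := by
    intro j hj w hw
    rw [hqdef j hj, hxdef j hj]
    exact real_inner_sub_nonpos_of_forall_norm_sub_le (hCconv j) (hP j _).1 (hP j _).2 hw
  have hsum : ∀ n, ∑ k ∈ range n, ‖x k - x (k + 1)‖ ^ 2 ≤ (b : ℝ) ^ 2 := fun n =>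
    (dykstra_sum_norm_sub_sq_le m hq0 (fun j hj => by rw [hqdef j hj]; abel)
      (fun j hj => hnormal j hj p (hpC j))
      (fun j hj => hnormal j hj _ (hCper j ▸ hxC (j + m) (by omega))) n).trans
      (pow_le_pow_left₀ (norm_nonneg _) hb 2)
  refine ⟨tendsto_zero_of_sum_range_sq_le (fun _ => norm_nonneg _) hsum, fun ε hε f => ?_⟩
  obtain ⟨n, hn, hsmall⟩ := exists_le_iterate_forall_Icc_le_of_sum_range_le
    (fun k => sq_nonneg ‖x k - x (k + 1)‖) hsum (pow_pos hε 2) f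
  exact ⟨n, hn, fun k hk => (pow_le_pow_iff_left₀ (norm_nonneg _) hε.le two_ne_zero).1 (hsmall k hk)⟩

theorem stmt_14
    (X : Type*) [NormedAddCommGroup X] [InnerProductSpace ℝ X]
    (m : ℕ) (hm : 2 ≤ m)
    (C : ℤ → Set X) (hCcl : ∀ n, IsClosed (C n)) (hCconv : ∀ n, Convex ℝ (C n))
    (hCne : (⋂ j ∈ Finset.Icc (1:ℤ) m, C j).Nonempty)
    (hCper : ∀ n : ℤ, C (n + m) = C n)
    (P : ℤ → X → X)
    (hP : ∀ j (y : X), P j y ∈ C j ∧ ∀ w ∈ C j, ‖y - P j y‖ ≤ ‖y - w‖)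
    (x q : ℤ → X) (hq0 : ∀ k : ℤ, k ≤ 0 → q k = 0)
    (hxdef : ∀ n : ℤ, 1 ≤ n → x n = P n (x (n - 1) + q (n - m)))
    (hqdef : ∀ n : ℤ, 1 ≤ n → q n = x (n - 1) + q (n - m) - x n)
    (p : X) (hp : ∀ j ∈ Finset.Icc (1:ℤ) m, p ∈ C j)
    (b : ℕ) (hb1 : 1 ≤ b) (hb : ‖x 0 - p‖ ≤ (b : ℝ))
    : Filter.Tendsto (fun n : ℕ => ‖x (n : ℤ) - x ((n : ℤ) + 1)‖) Filter.atTop (nhds 0) ∧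
      ∀ ε > (0:ℝ), ∀ f : ℕ → ℕ,
        ∃ n ≤ (fun p => p + f p + 1)^[⌊((b : ℝ) ^ 2) / ε ^ 2⌋₊] 0,
          ∀ k ∈ Finset.Icc n (n + f n), ‖x (k : ℤ) - x ((k : ℤ) + 1)‖ ≤ ε :=
  stmt_14_general X m hm C hCconv hCper P hP x q hq0 hxdef hqdef p hp b hb
end

section
/- For the Dykstra iteration (no boundedness assumption needed): for all ε > 0 and n ≥ 1, if ‖x_0 − P_j(x_0)‖ ≤ ε/5^{n−1} for all j ∈ {1,…,m}, then ‖x_n − x_0‖ ≤ ε. Moreover one has the stronger induction statement: if ‖x_0 − P_j(x_0)‖ ≤ ε/5^{n−1} for all j, then for all n' ∈ [1,n], ‖x_{n'} − x_0‖ ≤ ε and ‖q_{n'−m}‖ ≤ ε. -/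
/-!
Write `A k = ‖x k - x 0‖` and `B k = ‖q (k - m)‖`. The recursion for `q` gives
`‖q j‖ ≤ A (j - 1) + B j + A j`, and nonexpansiveness of `P k` gives
`A k ≤ A (k - 1) + B k + ‖P k (x 0) - x 0‖`. If all `A`, `B` up to index `K` are at most `a`
and `‖P (K + 1) (x 0) - x 0‖ ≤ δ`, then `B (K + 1) ≤ 3a` and `A (K + 1) ≤ 4a + δ`.
Starting from `a = 0` at `K = 0`, each further step costs a factor `5` in `δ`, because the
bounds `a` and `δ` both have to be `ε / 5` to make `4a + δ ≤ ε`.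
-/

open scoped RealInnerProductSpace

section NearestPoint

variable {E : Type*} [NormedAddCommGroup E] [InnerProductSpace ℝ E] {s : Set E}

theorem Convex.real_inner_sub_le_zero_of_nearest (hs : Convex ℝ s) {y p : E} (hp : p ∈ s)
    (hmin : ∀ w ∈ s, ‖y - p‖ ≤ ‖y - w‖) : ∀ w ∈ s, ⟪y - p, w - p⟫ ≤ 0 := by
  have : Nonempty s := ⟨⟨p, hp⟩⟩
  refine (norm_eq_iInf_iff_real_inner_le_zero hs hp).1 (le_antisymm ?_ ?_)
  · exact le_ciInf fun w => hmin w w.2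
  · exact ciInf_le ⟨0, Set.forall_mem_range.2 fun _ => norm_nonneg _⟩ (⟨p, hp⟩ : s)

theorem Convex.lipschitzWith_one_of_nearest (hs : Convex ℝ s) {p : E → E}
    (hp : ∀ y, p y ∈ s ∧ ∀ w ∈ s, ‖y - p y‖ ≤ ‖y - w‖) : LipschitzWith 1 p := by
  refine LipschitzWith.mk_one fun y z => ?_
  rw [dist_eq_norm, dist_eq_norm]
  have hy := hs.real_inner_sub_le_zero_of_nearest (hp y).1 (hp y).2 (p z) (hp z).1
  have hz := hs.real_inner_sub_le_zero_of_nearest (hp z).1 (hp z).2 (p y) (hp y).1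
  have hsq : ‖p y - p z‖ ^ 2 ≤ ⟪y - z, p y - p z⟫ := by
    rw [← real_inner_self_eq_norm_sq]
    simp only [inner_sub_left, inner_sub_right, real_inner_comm] at hy hz ⊢
    linarith
  have hcs := real_inner_le_norm (y - z) (p y - p z)
  nlinarith [norm_nonneg (p y - p z), norm_nonneg (y - z)]

end NearestPoint

theorem Function.Periodic.exists_mem_Icc_eq {α : Type*} {f : ℤ → α} {m : ℕ}
    (hf : Function.Periodic f m) (hm : 0 < m) (N : ℤ) :
    ∃ j ∈ Finset.Icc (1 : ℤ) m, f N = f j := by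
  have hlo := Int.emod_nonneg (N - 1) (by omega : (m : ℤ) ≠ 0)
  have hhi := Int.emod_lt_of_pos (N - 1) (by omega : (0 : ℤ) < m)
  refine ⟨(N - 1) % m + 1, Finset.mem_Icc.2 ⟨by omega, by omega⟩, ?_⟩
  calc f N = f (N - (N - 1) / m * m) := (hf.sub_int_mul_eq _).symm
    _ = f ((N - 1) % m + 1) := by
      congr 1
      linear_combination -Int.emod_def (N - 1) m

section Dykstra

variable {E : Type*} [SeminormedAddCommGroup E] {m : ℕ} {P : ℤ → E → E} {x q : ℤ → E}

theorem dykstra_norm_q_le (hqdef : ∀ n : ℤ, 1 ≤ n → q n = x (n - 1) + q (n - m) - x n)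
    {k : ℤ} (hk : 1 ≤ k) : ‖q k‖ ≤ ‖x (k - 1) - x 0‖ + ‖q (k - m)‖ + ‖x k - x 0‖ := by
  rw [hqdef k hk, show x (k - 1) + q (k - m) - x k
    = (x (k - 1) - x 0) + q (k - m) - (x k - x 0) by abel]
  exact (norm_sub_le _ _).trans (by gcongr; exact norm_add_le _ _)

theorem dykstra_norm_x_sub_le (hP : ∀ n, LipschitzWith 1 (P n))
    (hxdef : ∀ n : ℤ, 1 ≤ n → x n = P n (x (n - 1) + q (n - m))) {k : ℤ} (hk : 1 ≤ k) :
    ‖x k - x 0‖ ≤ ‖x (k - 1) - x 0‖ + ‖q (k - m)‖ + ‖P k (x 0) - x 0‖ := by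
  set v := x (k - 1) + q (k - m)
  have hlip : ‖P k v - P k (x 0)‖ ≤ ‖v - x 0‖ := by
    simpa [dist_eq_norm] using (hP k).dist_le_mul v (x 0)
  calc ‖x k - x 0‖ = ‖(P k v - P k (x 0)) + (P k (x 0) - x 0)‖ := by
        rw [hxdef k hk, sub_add_sub_cancel]
    _ ≤ ‖v - x 0‖ + ‖P k (x 0) - x 0‖ := (norm_add_le _ _).trans (by gcongr)
    _ = ‖(x (k - 1) - x 0) + q (k - m)‖ + ‖P k (x 0) - x 0‖ := by rw [sub_add_eq_add_sub]
    _ ≤ _ := by gcongr; exact norm_add_le _ _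

theorem dykstra_step (hm : 1 ≤ m) (hP : ∀ n, LipschitzWith 1 (P n))
    (hq0 : ∀ k : ℤ, k ≤ 0 → q k = 0)
    (hxdef : ∀ n : ℤ, 1 ≤ n → x n = P n (x (n - 1) + q (n - m)))
    (hqdef : ∀ n : ℤ, 1 ≤ n → q n = x (n - 1) + q (n - m) - x n)
    {K : ℤ} (hK : 0 ≤ K) {a δ : ℝ}
    (hbound : ∀ k, 0 ≤ k → k ≤ K → ‖x k - x 0‖ ≤ a ∧ ‖q (k - m)‖ ≤ a)
    (hδ : ‖P (K + 1) (x 0) - x 0‖ ≤ δ) :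
    ‖q (K + 1 - m)‖ ≤ 3 * a ∧ ‖x (K + 1) - x 0‖ ≤ 4 * a + δ := by
  have ha : 0 ≤ a := (norm_nonneg _).trans (hbound 0 le_rfl hK).1
  have hq : ‖q (K + 1 - m)‖ ≤ 3 * a := by
    rcases le_or_gt (K + 1 - m) 0 with hj | hj
    · rw [hq0 _ hj, norm_zero]
      positivity
    · have h₁ := (hbound (K + 1 - m - 1) (by omega) (by omega)).1
      have h₂ := hbound (K + 1 - m) (by omega) (by omega)
      linarith [dykstra_norm_q_le hqdef (show 1 ≤ K + 1 - m by omega)]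
  refine ⟨hq, ?_⟩
  have hx := dykstra_norm_x_sub_le hP hxdef (show 1 ≤ K + 1 by omega)
  rw [add_sub_cancel_right] at hx
  linarith [(hbound K hK le_rfl).1]

theorem dykstra_norm_le (hm : 1 ≤ m) (hP : ∀ n, LipschitzWith 1 (P n))
    (hq0 : ∀ k : ℤ, k ≤ 0 → q k = 0)
    (hxdef : ∀ n : ℤ, 1 ≤ n → x n = P n (x (n - 1) + q (n - m)))
    (hqdef : ∀ n : ℤ, 1 ≤ n → q n = x (n - 1) + q (n - m) - x n) (n : ℕ) :
    ∀ ε : ℝ, (∀ N : ℤ, 1 ≤ N → ‖x 0 - P N (x 0)‖ ≤ ε / 5 ^ n) →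
      ∀ k : ℤ, 0 ≤ k → k ≤ n + 1 → ‖x k - x 0‖ ≤ ε ∧ ‖q (k - m)‖ ≤ ε := by
  induction n with
  | zero =>
    intro ε hproj k hk0 hk
    have hδ : ‖P 1 (x 0) - x 0‖ ≤ ε := by simpa [norm_sub_rev] using hproj 1 le_rfl
    have hε : 0 ≤ ε := (norm_nonneg _).trans hδ
    have hstart : ∀ k, 0 ≤ k → k ≤ 0 → ‖x k - x 0‖ ≤ 0 ∧ ‖q (k - m)‖ ≤ 0 := by
      intro k hk0 hk
      obtain rfl : k = 0 := by omega
      simp [hq0 (-m) (by omega)]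
    obtain rfl | rfl : k = 0 ∨ k = 1 := by push_cast at hk; omega
    · exact (hstart 0 le_rfl le_rfl).imp (·.trans hε) (·.trans hε)
    · have hnext := dykstra_step hm hP hq0 hxdef hqdef le_rfl hstart (by simpa using hδ)
      norm_num at hnext
      exact ⟨hnext.2, hnext.1.trans hε⟩
  | succ n ih =>
    intro ε hproj k hk0 hk
    have hε : 0 ≤ ε := by
      have := (norm_nonneg _).trans (hproj 1 le_rfl)
      rwa [le_div_iff₀ (by positivity), zero_mul] at this
    have hε5 : ‖P (n + 1 + 1) (x 0) - x 0‖ ≤ ε / 5 := by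
      calc ‖P (n + 1 + 1) (x 0) - x 0‖ ≤ ε / 5 ^ (n + 1) := by
            simpa [norm_sub_rev] using hproj (n + 1 + 1) (by omega)
        _ ≤ ε / 5 := div_le_div_of_nonneg_left hε (by norm_num)
            (le_self_pow₀ (by norm_num) (by omega))
    have hbound := ih (ε / 5) fun N hN => by
      rw [div_div, ← pow_succ']
      exact hproj N hN
    push_cast at hk
    rcases le_or_gt k (n + 1) with hkn | hkn
    · exact (hbound k hk0 hkn).imp (·.trans (by linarith)) (·.trans (by linarith))
    · obtain rfl : k = n + 1 + 1 := by omega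
      have hnext := dykstra_step hm hP hq0 hxdef hqdef (by omega) hbound hε5
      exact ⟨by linarith [hnext.2], by linarith [hnext.1]⟩

end Dykstra

theorem stmt_17_general
    (X : Type*) [NormedAddCommGroup X] [InnerProductSpace ℝ X]
    (m : ℕ) (hm : 2 ≤ m)
    (C : ℤ → Set X) (hCconv : ∀ n, Convex ℝ (C n))
    (hCper : ∀ n : ℤ, C (n + m) = C n)
    (P : ℤ → X → X)
    (hP : ∀ j (y : X), P j y ∈ C j ∧ ∀ w ∈ C j, ‖y - P j y‖ ≤ ‖y - w‖)
    (x q : ℤ → X) (hq0 : ∀ k : ℤ, k ≤ 0 → q k = 0)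
    (hxdef : ∀ n : ℤ, 1 ≤ n → x n = P n (x (n - 1) + q (n - m)))
    (hqdef : ∀ n : ℤ, 1 ≤ n → q n = x (n - 1) + q (n - m) - x n)
    : ∀ ε > (0:ℝ), ∀ n : ℕ, 1 ≤ n →
        (∀ j ∈ Finset.Icc (1:ℤ) m, ‖x 0 - P j (x 0)‖ ≤ ε / 5 ^ (n - 1)) →
        ‖x (n : ℤ) - x 0‖ ≤ ε ∧
        ∀ n' ∈ Finset.Icc 1 n, ‖x (n' : ℤ) - x 0‖ ≤ ε ∧ ‖q ((n' : ℤ) - m)‖ ≤ ε := by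
  intro ε _ n hn hdist
  obtain ⟨n, rfl⟩ : ∃ n₀, n = n₀ + 1 := ⟨n - 1, by omega⟩
  have hproj : ∀ N : ℤ, 1 ≤ N → ‖x 0 - P N (x 0)‖ ≤ ε / 5 ^ n := by
    intro N _
    obtain ⟨j, hj, hCj⟩ := Function.Periodic.exists_mem_Icc_eq hCper (by omega) N
    calc ‖x 0 - P N (x 0)‖ ≤ ‖x 0 - P j (x 0)‖ := (hP N (x 0)).2 _ (hCj ▸ (hP j (x 0)).1)
      _ ≤ ε / 5 ^ n := by simpa using hdist j hj
  have hbound := dykstra_norm_le (by omega)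
    (fun N => (hCconv N).lipschitzWith_one_of_nearest (hP N)) hq0 hxdef hqdef n ε hproj
  have hall : ∀ n' ∈ Finset.Icc 1 (n + 1),
      ‖x (n' : ℤ) - x 0‖ ≤ ε ∧ ‖q ((n' : ℤ) - m)‖ ≤ ε := fun n' hn' => by
    rw [Finset.mem_Icc] at hn'
    exact hbound n' (by omega) (by omega)
  exact ⟨(hall (n + 1) (Finset.mem_Icc.2 ⟨by omega, le_rfl⟩)).1, hall⟩

theorem stmt_17
    (X : Type*) [NormedAddCommGroup X] [InnerProductSpace ℝ X]
    (m : ℕ) (hm : 2 ≤ m)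
    (C : ℤ → Set X) (hCcl : ∀ n, IsClosed (C n)) (hCconv : ∀ n, Convex ℝ (C n))
    (hCne : (⋂ j ∈ Finset.Icc (1:ℤ) m, C j).Nonempty)
    (hCper : ∀ n : ℤ, C (n + m) = C n)
    (P : ℤ → X → X)
    (hP : ∀ j (y : X), P j y ∈ C j ∧ ∀ w ∈ C j, ‖y - P j y‖ ≤ ‖y - w‖)
    (x q : ℤ → X) (hq0 : ∀ k : ℤ, k ≤ 0 → q k = 0)
    (hxdef : ∀ n : ℤ, 1 ≤ n → x n = P n (x (n - 1) + q (n - m)))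
    (hqdef : ∀ n : ℤ, 1 ≤ n → q n = x (n - 1) + q (n - m) - x n)
    : ∀ ε > (0:ℝ), ∀ n : ℕ, 1 ≤ n →
        (∀ j ∈ Finset.Icc (1:ℤ) m, ‖x 0 - P j (x 0)‖ ≤ ε / 5 ^ (n - 1)) →
        ‖x (n : ℤ) - x 0‖ ≤ ε ∧
        ∀ n' ∈ Finset.Icc 1 n, ‖x (n' : ℤ) - x 0‖ ≤ ε ∧ ‖q ((n' : ℤ) - m)‖ ≤ ε :=
  stmt_17_general X m hm C hCconv hCper P hP x q hq0 hxdef hqdef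
end

section
/- Suppose Dykstra's algorithm converges to P_C(x_0) for every starting point, with a rate of convergence uniform on bounded balls: whenever ‖x_0 − p‖ ≤ b, for all ε > 0 and n ≥ ρ(b,ε), ‖x_n − P_C(x_0)‖ ≤ ε. Then μ(b,ε) := max{ε²/(16b·ρ(b,ε/2)), ε/(2·5^{ρ(b,ε/2)})} is a modulus of regularity for C_1,…,C_m centred at p: for all x with ‖x − p‖ ≤ b, if ‖x − P_j(x)‖ ≤ μ(b,ε) for all j, then ‖x − P_C(x)‖ ≤ ε. -/
/-!
Run Dykstra's algorithm from a point `y` that is `δ`-close to every `C_j`. Each step satisfies an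
energy inequality coming from the variational inequalities of the projections; telescoping it,
the residual terms cancel except for the last `m` of them, which are controlled by `δ` times the
total path length `T` of the iterates. With Cauchy–Schwarz this gives `‖x_n - y‖² ≤ n δ²`, so for
`n = ρ(b, ε/2)` and `δ = μ(b, ε)` the iterate `x_n` is `ε/2`-close to `y`. By the assumed rate it
is also `ε/2`-close to `P_C(y)`, whence `‖y - P_C(y)‖ ≤ ‖y - x_n‖ + ‖x_n - P_C(y)‖ ≤ ε`.
-/

open scoped RealInnerProductSpace
open Finset

theorem Finset.sum_Ioc_tsub_succ_add {M : Type*} [AddCommMonoid M] (f : ℕ → M) (hf : f 0 = 0)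
    (m n : ℕ) :
    ∑ k ∈ Ioc (n + 1 - m) (n + 1), f k + f (n + 1 - m) =
      ∑ k ∈ Ioc (n - m) n, f k + f (n + 1) := by
  rcases Nat.eq_zero_or_pos m with rfl | hm
  · simp
  rcases le_or_gt m n with hmn | hnm
  · rw [show n + 1 - m = n - m + 1 by omega, ← sum_Ioc_succ_top (Nat.sub_le n m),
      ← sum_Ioc_consecutive f (Nat.le_succ (n - m)) (by omega), Nat.Ioc_succ_singleton,
      sum_singleton, add_comm]
  · rw [Nat.sub_eq_zero_of_le (by omega : n + 1 ≤ m), Nat.sub_eq_zero_of_le hnm.le, hf, add_zero,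
      sum_Ioc_succ_top (Nat.zero_le n)]

theorem Finset.sum_Ioc_tsub_le_sum_range {M : Type*} [AddCommGroup M] [PartialOrder M]
    [IsOrderedAddMonoid M] {f g : ℕ → M} (hf : f 0 = 0) {m : ℕ}
    (h : ∀ t, f (t + 1) - f (t + 1 - m) ≤ g t) (n : ℕ) :
    ∑ k ∈ Ioc (n - m) n, f k ≤ ∑ t ∈ range n, g t := by
  induction n with
  | zero => simp
  | succ n ih =>
    calc ∑ k ∈ Ioc (n + 1 - m) (n + 1), f k
        = ∑ k ∈ Ioc (n - m) n, f k + (f (n + 1) - f (n + 1 - m)) := by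
          rw [add_sub, ← sum_Ioc_tsub_succ_add f hf, add_sub_cancel_right]
      _ ≤ ∑ t ∈ range (n + 1), g t := by
          rw [sum_range_succ]
          exact add_le_add ih (h n)

def IsMetricProjection {X : Type*} [NormedAddCommGroup X] (K : Set X) (f : X → X) : Prop :=
  ∀ y, f y ∈ K ∧ ∀ w ∈ K, ‖y - f y‖ ≤ ‖y - w‖

theorem IsMetricProjection.inner_sub_le_zero {X : Type*} [NormedAddCommGroup X]
    [InnerProductSpace ℝ X] {K : Set X} {f : X → X} (hf : IsMetricProjection K f)
    (hK : Convex ℝ K) (y : X) {w : X} (hw : w ∈ K) : ⟪y - f y, w - f y⟫ ≤ 0 := by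
  have hbdd : BddBelow (Set.range fun w : K => ‖y - w‖) :=
    ⟨0, by rintro _ ⟨w, rfl⟩; exact norm_nonneg _⟩
  have : Nonempty K := ⟨⟨w, hw⟩⟩
  refine (norm_eq_iInf_iff_real_inner_le_zero hK (hf y).1).1 ?_ w hw
  exact le_antisymm (le_ciInf fun w => (hf y).2 w w.2) (ciInf_le hbdd ⟨f y, (hf y).1⟩)

/-- The pair `(x n, q n)` of the paper's iterate and residual. The lagged index `n - (m - 1)` is
`n + 1 - m` for `m ≥ 1`; truncated subtraction sends it to `0` exactly where the paper's `q_k`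
with `k ≤ 0` vanishes. -/
noncomputable def dykstra {X : Type*} [AddCommGroup X] (m : ℕ) (P : ℤ → X → X) (x₀ : X) :
    ℕ → X × X
  | 0 => (x₀, 0)
  | n + 1 =>
    let a := (dykstra m P x₀ n).1 + (dykstra m P x₀ (n - (m - 1))).2
    (P (n + 1 : ℕ) a, a - P (n + 1 : ℕ) a)
decreasing_by all_goals omega

noncomputable def dykstraX {X : Type*} [AddCommGroup X] (m : ℕ) (P : ℤ → X → X) (x₀ : X)
    (n : ℕ) : X :=
  (dykstra m P x₀ n).1

noncomputable def dykstraQ {X : Type*} [AddCommGroup X] (m : ℕ) (P : ℤ → X → X) (x₀ : X)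
    (n : ℕ) : X :=
  (dykstra m P x₀ n).2

section Recursion

variable {X : Type*} [AddCommGroup X] {m : ℕ} {P : ℤ → X → X} {x₀ : X}

@[simp]
theorem dykstraX_zero : dykstraX m P x₀ 0 = x₀ := by
  simp [dykstraX, dykstra]

@[simp]
theorem dykstraQ_zero : dykstraQ m P x₀ 0 = 0 := by
  simp [dykstraQ, dykstra]

theorem dykstraX_succ (hm : 0 < m) (n : ℕ) :
    dykstraX m P x₀ (n + 1) =
      P (n + 1 : ℕ) (dykstraX m P x₀ n + dykstraQ m P x₀ (n + 1 - m)) := by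
  rw [dykstraX, dykstra, show n - (m - 1) = n + 1 - m by omega]
  rfl

theorem dykstraQ_succ (hm : 0 < m) (n : ℕ) :
    dykstraQ m P x₀ (n + 1) =
      dykstraX m P x₀ n + dykstraQ m P x₀ (n + 1 - m) - dykstraX m P x₀ (n + 1) := by
  rw [dykstraX_succ hm, dykstraQ, dykstra, show n - (m - 1) = n + 1 - m by omega]
  rfl

theorem dykstraX_sub_succ (hm : 0 < m) (n : ℕ) :
    dykstraX m P x₀ n - dykstraX m P x₀ (n + 1) =
      dykstraQ m P x₀ (n + 1) - dykstraQ m P x₀ (n + 1 - m) := by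
  rw [dykstraQ_succ hm]
  abel

theorem dykstraX_toNat (hm : 0 < m) {n : ℤ} (hn : 1 ≤ n) :
    dykstraX m P x₀ n.toNat =
      P n (dykstraX m P x₀ (n - 1).toNat + dykstraQ m P x₀ (n - m).toNat) := by
  obtain ⟨t, rfl⟩ : ∃ t : ℕ, n = t + 1 := ⟨(n - 1).toNat, by omega⟩
  rw [show ((t : ℤ) + 1).toNat = t + 1 by omega, show ((t : ℤ) + 1 - 1).toNat = t by omega,
    show ((t : ℤ) + 1 - m).toNat = t + 1 - m by omega, dykstraX_succ hm, Nat.cast_succ]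

theorem dykstraQ_toNat (hm : 0 < m) {n : ℤ} (hn : 1 ≤ n) :
    dykstraQ m P x₀ n.toNat = dykstraX m P x₀ (n - 1).toNat + dykstraQ m P x₀ (n - m).toNat -
      dykstraX m P x₀ n.toNat := by
  obtain ⟨t, rfl⟩ : ∃ t : ℕ, n = t + 1 := ⟨(n - 1).toNat, by omega⟩
  rw [show ((t : ℤ) + 1).toNat = t + 1 by omega, show ((t : ℤ) + 1 - 1).toNat = t by omega,
    show ((t : ℤ) + 1 - m).toNat = t + 1 - m by omega, dykstraQ_succ hm]

end Recursion

section Normed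

variable {X : Type*} [NormedAddCommGroup X] {m : ℕ} {C : ℤ → Set X} {P : ℤ → X → X} {x₀ : X}

theorem norm_sub_metricProjection_le_of_periodic (hP : ∀ j, IsMetricProjection (C j) (P j))
    (hm : 0 < m) (hper : Function.Periodic C m) {y : X} {δ : ℝ}
    (hy : ∀ j ∈ Icc (1 : ℤ) m, ‖y - P j y‖ ≤ δ) (k : ℤ) : ‖y - P k y‖ ≤ δ := by
  set j := (k - 1) % (m : ℤ) + 1
  have hj : j ∈ Icc (1 : ℤ) m := by
    have := Int.emod_nonneg (k - 1) (Int.natCast_ne_zero.2 hm.ne')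
    have := Int.emod_lt_of_pos (k - 1) (Int.natCast_pos.2 hm)
    exact mem_Icc.2 ⟨by omega, by omega⟩
  have hCk : C k = C j := by
    have hk : j + ((k - 1) / m) • (m : ℤ) = k := by
      rw [smul_eq_mul, mul_comm]; linarith [Int.mul_ediv_add_emod (k - 1) m]
    rw [← hk, hper.zsmul]
  exact ((hP k y).2 _ (hCk ▸ (hP j y).1)).trans (hy j hj)

theorem dykstraX_succ_mem (hm : 0 < m) (hP : ∀ j, IsMetricProjection (C j) (P j)) (n : ℕ) :
    dykstraX m P x₀ (n + 1) ∈ C (n + 1 : ℕ) := by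
  rw [dykstraX_succ hm]
  exact (hP _ _).1

theorem norm_dykstraQ_succ_sub_le (hm : 0 < m) (n : ℕ) :
    ‖dykstraQ m P x₀ (n + 1)‖ - ‖dykstraQ m P x₀ (n + 1 - m)‖ ≤
      ‖dykstraX m P x₀ n - dykstraX m P x₀ (n + 1)‖ := by
  rw [dykstraX_sub_succ hm]
  exact norm_sub_norm_le _ _

end Normed

section InnerProduct

variable {X : Type*} [NormedAddCommGroup X] [InnerProductSpace ℝ X] {m : ℕ} {C : ℤ → Set X}
  {P : ℤ → X → X} {x₀ : X}

theorem inner_dykstraQ_succ_le_zero (hm : 0 < m) (hC : ∀ j, Convex ℝ (C j))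
    (hP : ∀ j, IsMetricProjection (C j) (P j)) (n : ℕ) {w : X} (hw : w ∈ C (n + 1 : ℕ)) :
    ⟪dykstraQ m P x₀ (n + 1), w - dykstraX m P x₀ (n + 1)⟫ ≤ 0 := by
  rw [dykstraQ_succ hm, dykstraX_succ hm]
  exact (hP _).inner_sub_le_zero (hC _) _ hw

theorem inner_dykstraQ_tsub_le_zero (hm : 0 < m) (hC : ∀ j, Convex ℝ (C j))
    (hP : ∀ j, IsMetricProjection (C j) (P j)) (hper : Function.Periodic C m) (n : ℕ) :
    ⟪dykstraQ m P x₀ (n + 1 - m), dykstraX m P x₀ (n + 1) - dykstraX m P x₀ (n + 1 - m)⟫ ≤ 0 := by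
  rcases le_or_gt (n + 1) m with hnm | hmn
  · simp [Nat.sub_eq_zero_of_le hnm]
  obtain ⟨k, hk⟩ : ∃ k, n + 1 - m = k + 1 := ⟨n - m, by omega⟩
  have hCk : C (n + 1 : ℕ) = C (k + 1 : ℕ) := by
    rw [← hper ((k + 1 : ℕ) : ℤ), show ((k + 1 : ℕ) : ℤ) + m = (n + 1 : ℕ) by omega]
  rw [hk]
  exact inner_dykstraQ_succ_le_zero hm hC hP k (hCk ▸ dykstraX_succ_mem hm hP n)

theorem inner_dykstraQ_succ_le (hm : 0 < m) (hC : ∀ j, Convex ℝ (C j))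
    (hP : ∀ j, IsMetricProjection (C j) (P j)) (n : ℕ) (z : X) :
    ⟪dykstraQ m P x₀ (n + 1), z - dykstraX m P x₀ (n + 1)⟫ ≤
      ‖z - P (n + 1 : ℕ) z‖ * ‖dykstraQ m P x₀ (n + 1)‖ := by
  have hproj := inner_dykstraQ_succ_le_zero (x₀ := x₀) hm hC hP n ((hP _) z).1
  have hcs := real_inner_le_norm (dykstraQ m P x₀ (n + 1)) (z - P (n + 1 : ℕ) z)
  rw [show z - dykstraX m P x₀ (n + 1) =
      (z - P (n + 1 : ℕ) z) + (P (n + 1 : ℕ) z - dykstraX m P x₀ (n + 1)) by abel,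
    inner_add_right]
  linarith

theorem dykstra_energy_step (hm : 0 < m) (hC : ∀ j, Convex ℝ (C j))
    (hP : ∀ j, IsMetricProjection (C j) (P j)) (hper : Function.Periodic C m) (n : ℕ) (z : X) :
    2 * ⟪dykstraQ m P x₀ (n + 1), dykstraX m P x₀ (n + 1) - z⟫ -
        2 * ⟪dykstraQ m P x₀ (n + 1 - m), dykstraX m P x₀ (n + 1 - m) - z⟫ ≤
      ‖dykstraX m P x₀ n - z‖ ^ 2 - ‖dykstraX m P x₀ (n + 1) - z‖ ^ 2 -
        ‖dykstraX m P x₀ n - dykstraX m P x₀ (n + 1)‖ ^ 2 := by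
  set x := dykstraX m P x₀
  set q := dykstraQ m P x₀
  have hlag : ⟪q (n + 1 - m), x (n + 1) - z⟫ - ⟪q (n + 1 - m), x (n + 1 - m) - z⟫ ≤ 0 := by
    rw [← inner_sub_right, sub_sub_sub_cancel_right]
    exact inner_dykstraQ_tsub_le_zero hm hC hP hper n
  have hexpand : ‖x n - z‖ ^ 2 =
      ‖x (n + 1) - z‖ ^ 2 + 2 * ⟪x (n + 1) - z, x n - x (n + 1)⟫ + ‖x n - x (n + 1)‖ ^ 2 := by
    rw [← norm_add_sq_real, sub_add_sub_cancel']
  have hcross : ⟪x (n + 1) - z, x n - x (n + 1)⟫ =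
      ⟪q (n + 1), x (n + 1) - z⟫ - ⟪q (n + 1 - m), x (n + 1) - z⟫ := by
    rw [dykstraX_sub_succ hm, inner_sub_right, real_inner_comm, real_inner_comm (q _)]
  linarith

theorem norm_dykstraX_sub_sq_le (hm : 0 < m) (hC : ∀ j, Convex ℝ (C j))
    (hP : ∀ j, IsMetricProjection (C j) (P j)) (hper : Function.Periodic C m) {δ : ℝ}
    (hδ : ∀ t : ℕ, ‖x₀ - P (t + 1 : ℕ) x₀‖ ≤ δ) (n : ℕ) :
    ‖dykstraX m P x₀ n - x₀‖ ^ 2 ≤ n * δ ^ 2 := by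
  set x := dykstraX m P x₀
  set q := dykstraQ m P x₀
  set T := ∑ t ∈ range n, ‖x t - x (t + 1)‖
  have henergy : 2 * ∑ k ∈ Ioc (n - m) n, ⟪q k, x k - x₀⟫ ≤
      -‖x n - x₀‖ ^ 2 - ∑ t ∈ range n, ‖x t - x (t + 1)‖ ^ 2 := by
    rw [mul_sum]
    refine (sum_Ioc_tsub_le_sum_range (by simp [q])
      (fun t => dykstra_energy_step hm hC hP hper t x₀) n).trans_eq ?_
    rw [sum_sub_distrib, sum_range_sub' (fun t => ‖x t - x₀‖ ^ 2)]
    simp [x]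
  have hresidual : ∑ k ∈ Ioc (n - m) n, ‖q k‖ ≤ T :=
    sum_Ioc_tsub_le_sum_range (by simp [q]) (norm_dykstraQ_succ_sub_le hm) n
  have hinner : -∑ k ∈ Ioc (n - m) n, ⟪q k, x k - x₀⟫ ≤ δ * ∑ k ∈ Ioc (n - m) n, ‖q k‖ := by
    rw [← sum_neg_distrib, mul_sum]
    refine sum_le_sum fun k hk => ?_
    obtain ⟨t, rfl⟩ : ∃ t, k = t + 1 := ⟨k - 1, by have := (mem_Ioc.1 hk).1; omega⟩
    rw [← inner_neg_right, neg_sub]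
    exact (inner_dykstraQ_succ_le hm hC hP t x₀).trans
      (mul_le_mul_of_nonneg_right (hδ t) (norm_nonneg _))
  have hδ0 : 0 ≤ δ := (norm_nonneg _).trans (hδ 0)
  have hcs : T ^ 2 ≤ n * ∑ t ∈ range n, ‖x t - x (t + 1)‖ ^ 2 := by
    simpa using sq_sum_le_card_mul_sum_sq (s := range n) (f := fun t => ‖x t - x (t + 1)‖)
  rcases n.eq_zero_or_pos with rfl | hn
  · simp [x]
  -- `n ‖x n - x₀‖² ≤ n (2 δ T - ∑ ‖x t - x (t + 1)‖²) ≤ 2 n δ T - T² = n² δ² - (T - n δ)²`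
  have hkey : (n : ℝ) * ‖x n - x₀‖ ^ 2 ≤ n * (n * δ ^ 2) := by
    nlinarith [sq_nonneg (T - n * δ), mul_le_mul_of_nonneg_left hresidual hδ0]
  exact le_of_mul_le_mul_left hkey (by positivity)

end InnerProduct

theorem natCast_mul_sq_div_five_pow_le (N : ℕ) (ε : ℝ) :
    (N : ℝ) * (ε / (2 * 5 ^ N)) ^ 2 ≤ (ε / 2) ^ 2 := by
  have hN : (N : ℝ) ≤ ((5 : ℝ) ^ N) ^ 2 := by
    rw [← pow_mul, mul_comm, pow_mul]
    exact_mod_cast (Nat.lt_pow_self (by norm_num : 1 < 25)).le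
  calc (N : ℝ) * (ε / (2 * 5 ^ N)) ^ 2 ≤ ((5 : ℝ) ^ N) ^ 2 * (ε / (2 * 5 ^ N)) ^ 2 := by gcongr
    _ = (ε / 2) ^ 2 := by field_simp

theorem natCast_mul_sq_div_le {b ε : ℝ} (hε : 0 < ε) (hεb : ε ≤ b) (N : ℕ) :
    (N : ℝ) * (ε ^ 2 / (16 * b * N)) ^ 2 ≤ (ε / 2) ^ 2 := by
  rcases N.eq_zero_or_pos with rfl | hN
  · simpa using sq_nonneg (ε / 2)
  have hN1 : (1 : ℝ) ≤ N := by exact_mod_cast hN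
  have hb : 0 < b := hε.trans_le hεb
  rw [div_pow, mul_div_assoc', div_le_iff₀ (by positivity)]
  have hεb2 : ε ^ 2 ≤ 64 * b ^ 2 * N := by nlinarith
  nlinarith [mul_le_mul_of_nonneg_left hεb2 (by positivity : (0 : ℝ) ≤ N * ε ^ 2)]

theorem natCast_mul_sq_max_le {b ε : ℝ} (hε : 0 < ε) (hεb : ε ≤ b) (N : ℕ) :
    (N : ℝ) * max (ε ^ 2 / (16 * b * N)) (ε / (2 * 5 ^ N)) ^ 2 ≤ (ε / 2) ^ 2 := by
  rcases le_total (ε ^ 2 / (16 * b * N)) (ε / (2 * 5 ^ N)) with h | h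
  · rw [max_eq_right h]
    exact natCast_mul_sq_div_five_pow_le N ε
  · rw [max_eq_left h]
    exact natCast_mul_sq_div_le hε hεb N

theorem stmt_18_general
    (X : Type*) [NormedAddCommGroup X] [InnerProductSpace ℝ X]
    (m : ℕ) (hm : 2 ≤ m)
    (C : ℤ → Set X) (hCconv : ∀ n, Convex ℝ (C n))
    (hCper : ∀ n : ℤ, C (n + m) = C n)
    (P : ℤ → X → X)
    (hP : ∀ j (y : X), P j y ∈ C j ∧ ∀ w ∈ C j, ‖y - P j y‖ ≤ ‖y - w‖)
    (S : Set X)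
    (p : X) (hp : p ∈ S)
    (PC : X → X) (hPC : ∀ y : X, PC y ∈ S ∧ ∀ w ∈ S, ‖y - PC y‖ ≤ ‖y - w‖)
    (ρ : ℕ → ℝ → ℕ)
    (hρ : ∀ x q : ℤ → X, (∀ k : ℤ, k ≤ 0 → q k = 0) →
      (∀ n : ℤ, 1 ≤ n → x n = P n (x (n - 1) + q (n - m))) →
      (∀ n : ℤ, 1 ≤ n → q n = x (n - 1) + q (n - m) - x n) →
      ∀ b : ℕ, ‖x 0 - p‖ ≤ (b : ℝ) →
        ∀ ε > (0:ℝ), ∀ n : ℕ, ρ b ε ≤ n → ‖x (n : ℤ) - PC (x 0)‖ ≤ ε) :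
    ∀ b : ℕ, 1 ≤ b → ∀ ε > (0:ℝ), ∀ y : X, ‖y - p‖ ≤ (b : ℝ) →
      (∀ j ∈ Finset.Icc (1:ℤ) m,
        ‖y - P j y‖ ≤ max (ε ^ 2 / (16 * b * ρ b (ε / 2)))
          (ε / (2 * 5 ^ (ρ b (ε / 2))))) →
      ‖y - PC y‖ ≤ ε := by
  intro b _ ε hε y hyb hclose
  have hm0 : 0 < m := by omega
  by_cases hbε : (b : ℝ) ≤ ε
  · exact ((hPC y).2 p hp).trans (hyb.trans hbε)
  set N := ρ b (ε / 2)
  set x := dykstraX m P y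
  have hlimit : ‖x N - PC y‖ ≤ ε / 2 := by
    simpa [x] using hρ (fun k => x k.toNat) (fun k => dykstraQ m P y k.toNat)
      (fun k hk => by simp [Int.toNat_of_nonpos hk]) (fun n hn => dykstraX_toNat hm0 hn)
      (fun n hn => dykstraQ_toNat hm0 hn) b (by simpa [x] using hyb) (ε / 2) (by positivity) N
      le_rfl
  have hdrift : ‖y - x N‖ ≤ ε / 2 := by
    rw [norm_sub_rev, ← sq_le_sq₀ (norm_nonneg _) (by positivity)]
    refine (norm_dykstraX_sub_sq_le hm0 hCconv hP hCper
      (fun t => norm_sub_metricProjection_le_of_periodic hP hm0 hCper hclose _) N).trans ?_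
    exact natCast_mul_sq_max_le hε (not_le.1 hbε).le N
  linarith [norm_sub_le_norm_sub_add_norm_sub y (x N) (PC y)]

theorem stmt_18
    (X : Type*) [NormedAddCommGroup X] [InnerProductSpace ℝ X]
    (m : ℕ) (hm : 2 ≤ m)
    (C : ℤ → Set X) (hCcl : ∀ n, IsClosed (C n)) (hCconv : ∀ n, Convex ℝ (C n))
    (hCper : ∀ n : ℤ, C (n + m) = C n)
    (P : ℤ → X → X)
    (hP : ∀ j (y : X), P j y ∈ C j ∧ ∀ w ∈ C j, ‖y - P j y‖ ≤ ‖y - w‖)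
    (S : Set X) (hS : S = ⋂ j ∈ Finset.Icc (1:ℤ) m, C j)
    (p : X) (hp : p ∈ S)
    (PC : X → X) (hPC : ∀ y : X, PC y ∈ S ∧ ∀ w ∈ S, ‖y - PC y‖ ≤ ‖y - w‖)
    (ρ : ℕ → ℝ → ℕ)
    (hρ : ∀ x q : ℤ → X, (∀ k : ℤ, k ≤ 0 → q k = 0) →
      (∀ n : ℤ, 1 ≤ n → x n = P n (x (n - 1) + q (n - m))) →
      (∀ n : ℤ, 1 ≤ n → q n = x (n - 1) + q (n - m) - x n) →
      ∀ b : ℕ, ‖x 0 - p‖ ≤ (b : ℝ) →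
        ∀ ε > (0:ℝ), ∀ n : ℕ, ρ b ε ≤ n → ‖x (n : ℤ) - PC (x 0)‖ ≤ ε) :
    ∀ b : ℕ, 1 ≤ b → ∀ ε > (0:ℝ), ∀ y : X, ‖y - p‖ ≤ (b : ℝ) →
      (∀ j ∈ Finset.Icc (1:ℤ) m,
        ‖y - P j y‖ ≤ max (ε ^ 2 / (16 * b * ρ b (ε / 2)))
          (ε / (2 * 5 ^ (ρ b (ε / 2))))) →
      ‖y - PC y‖ ≤ ε :=
  stmt_18_general X m hm C hCconv hCper P hP S p hp PC hPC ρ hρ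
end
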